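/- arXiv:math/0304161 — 3 statements merged into one kernel-verified Lean document; each statement's English description precedes it below -/
import Mathlib

section
/- The multilinear part Lie(n) of the free Lie algebra over ℤ on n generators has rank (n-1)! as a free abelian group. -/
noncomputable section

/-- Multilinear Lie monomials in the free (tensor) algebra over `ℤ` on `Fin n`. -/
inductive LieMono (n : ℕ) : Finset (Fin n) → FreeAlgebra ℤ (Fin n) → Prop
  | gen (i : Fin n) : LieMono n {i} (FreeAlgebra.ι ℤ i)
  | bracket {s t : Finset (Fin n)} {a b : FreeAlgebra ℤ (Fin n)} :
      LieMono n s a → LieMono n t b → Disjoint s t → LieMono n (s ∪ t) (a * b - b * a)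

/-- The multilinear part `Lie(n)` of the free Lie algebra over `ℤ`. -/
def LieN (n : ℕ) : Submodule ℤ (FreeAlgebra ℤ (Fin n)) :=
  Submodule.span ℤ {x | LieMono n Finset.univ x}

/-!
Fix a generator `x₀`. Jacobi's identity `⁅x, ⁅b₁, b₂⁆⁆ = ⁅⁅x, b₁⁆, b₂⁆ - ⁅⁅x, b₂⁆, b₁⁆` pushes
every multilinear Lie monomial, by induction on its bracketing, into the span of the left-normed
monomials `⁅⋯⁅x₀, x_{w₁}⁆, …, x_{wₙ}⁆` where `w` runs over the `n!` orderings of the other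
generators. These are linearly independent: the only word beginning with `x₀` in the expansion of
the monomial indexed by `w` is `x₀ x_{w₁} ⋯ x_{wₙ}`.
-/

open FreeAlgebra

section LeftNormed

variable (R : Type*) {X : Type*} [CommRing R]

def leftNormedBracket (i : X) (w : List X) : FreeAlgebra R X :=
  w.foldl (fun a j => ⁅a, ι R j⁆) (ι R i)

@[simp]
lemma leftNormedBracket_nil (i : X) : leftNormedBracket R i [] = ι R i := rfl

lemma leftNormedBracket_concat (i : X) (w : List X) (j : X) :
    leftNormedBracket R i (w ++ [j]) = ⁅leftNormedBracket R i w, ι R j⁆ :=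
  List.foldl_concat ..

variable {R}

lemma basisFreeMonoid_ofList (w : List X) :
    basisFreeMonoid R X (.ofList w) = (w.map (ι R)).prod := by
  simp [basisFreeMonoid, equivMonoidAlgebraFreeMonoid]

variable [DecidableEq X]

/-- `foxRep i x = !![ε x, ∂ᵢ x; 0, x]`, where `ε` is the augmentation and the Fox derivative `∂ᵢ x`
collects the words of `x` that begin with `xᵢ`, with that letter removed: multiplicativity is the
rule `∂ᵢ (x * y) = ∂ᵢ x * y + ε x • ∂ᵢ y`. -/
def foxRep (i : X) : FreeAlgebra R X →ₐ[R] Matrix (Fin 2) (Fin 2) (FreeAlgebra R X) :=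
  lift R fun k => !![0, if k = i then 1 else 0; 0, ι R k]

lemma foxRep_leftNormedBracket {i : X} {w : List X} (hi : i ∉ w) :
    foxRep i (leftNormedBracket R i w) =
      !![0, (w.map (ι R)).prod; 0, leftNormedBracket R i w] := by
  induction w using List.reverseRecOn with
  | nil => simp [foxRep]
  | append_singleton w j ih =>
    have hiw : i ∉ w := fun h => hi (List.mem_append_left _ h)
    have hji : j ≠ i := fun h => hi (by simp [h])
    rw [leftNormedBracket_concat, Ring.lie_def, map_sub, map_mul, map_mul, ih hiw]
    simp [foxRep, hji, ← Ring.lie_def]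

lemma linearIndependent_leftNormedBracket {i : X} {S : Set (List X)} (hS : ∀ w ∈ S, i ∉ w) :
    LinearIndependent R fun w : S => leftNormedBracket R i w.1 := by
  refine .of_comp ((Matrix.entryLinearMap R _ 0 1).comp (foxRep i).toLinearMap) ?_
  have : (Matrix.entryLinearMap R _ 0 1).comp (foxRep i).toLinearMap ∘
      (fun w : S => leftNormedBracket R i w.1) = basisFreeMonoid R X ∘ fun w => .ofList w.1 := by
    ext w : 1
    simp [foxRep_leftNormedBracket (hS w.1 w.2), basisFreeMonoid_ofList]
  rw [this]
  exact (basisFreeMonoid R X).linearIndependent.comp _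
    (FreeMonoid.ofList.injective.comp Subtype.val_injective)

end LeftNormed

section Orderings

variable {X : Type*} [DecidableEq X]

def orderings (s : Finset X) : Set (List X) := {w | w.Nodup ∧ w.toFinset = s}

lemma orderings_eq_permutations (s : Finset X) :
    orderings s = ↑s.toList.permutations.toFinset := by
  ext w
  simp only [orderings, Set.mem_ofPred_eq, Finset.mem_coe, List.mem_toFinset,
    List.mem_permutations]
  constructor
  · rintro ⟨hw, rfl⟩
    exact (List.toFinset_toList hw).symm
  · intro h
    exact ⟨h.nodup_iff.2 s.nodup_toList,
      (List.toFinset_eq_of_perm _ _ h).trans s.toList_toFinset⟩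

lemma mk_orderings (s : Finset X) : Cardinal.mk (orderings s) = s.card.factorial := by
  rw [orderings_eq_permutations, Finset.coe_sort_coe, Cardinal.mk_coe_finset,
    List.toFinset_card_of_nodup (List.nodup_permutations _ s.nodup_toList),
    List.length_permutations, Finset.length_toList]

lemma notMem_of_mem_orderings_erase {s : Finset X} {i : X} {w : List X}
    (hw : w ∈ orderings (s.erase i)) : i ∉ w := fun h =>
  Finset.notMem_erase i s (hw.2 ▸ List.mem_toFinset.2 h)

end Orderings

section Spanning

-- Kept local to this section: globally it would reroute the `AddCommGroup` instance in `LieN`.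
attribute [local instance] LieRing.ofAssociativeRing LieAlgebra.ofAssociativeAlgebra

variable {m : ℕ}

def leftNormedSpan (i : Fin m) (u : Finset (Fin m)) : Submodule ℤ (FreeAlgebra ℤ (Fin m)) :=
  Submodule.span ℤ (leftNormedBracket ℤ i '' orderings u)

lemma lieMono_leftNormedBracket {i : Fin m} {w : List (Fin m)} (hw : w.Nodup) (hi : i ∉ w) :
    LieMono m (insert i w.toFinset) (leftNormedBracket ℤ i w) := by
  induction w using List.reverseRecOn with
  | nil => simpa using LieMono.gen i
  | append_singleton w j ih =>
    rw [← List.concat_eq_append, List.nodup_concat] at hw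
    have hij : i ≠ j := fun h => hi (by simp [h])
    have h := (ih hw.2 fun h => hi (List.mem_append_left _ h)).bracket (LieMono.gen j)
      (by simp [hij.symm, hw.1])
    rw [leftNormedBracket_concat, Ring.lie_def]
    simpa [Finset.insert_union] using h

lemma lie_mem_leftNormedSpan {t : Finset (Fin m)} {b : FreeAlgebra ℤ (Fin m)}
    (hb : LieMono m t b) {i : Fin m} {u : Finset (Fin m)} {x : FreeAlgebra ℤ (Fin m)}
    (hx : x ∈ leftNormedSpan i u) (hd : Disjoint (insert i u) t) :
    ⁅x, b⁆ ∈ leftNormedSpan i (u ∪ t) := by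
  induction hb generalizing u x with
  | gen j =>
    induction hx using Submodule.span_induction with
    | mem _ hx =>
      obtain ⟨w, ⟨hw, rfl⟩, rfl⟩ := hx
      have hjw : j ∉ w := fun h =>
        Finset.disjoint_right.1 hd (Finset.mem_singleton_self j) (by simp [h])
      refine Submodule.subset_span ⟨w ++ [j], ⟨?_, by simp⟩, leftNormedBracket_concat ..⟩
      rw [← List.concat_eq_append, List.nodup_concat]
      exact ⟨hjw, hw⟩
    | zero => simp
    | add x y _ _ hx hy => rw [add_lie]; exact add_mem hx hy
    | smul r x _ hx => rw [smul_lie]; exact Submodule.smul_mem _ r hx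
  | @bracket t₁ t₂ b₁ b₂ _ _ ht ih₁ ih₂ =>
    obtain ⟨hd₁, hd₂⟩ := Finset.disjoint_union_right.mp hd
    have jacobi : ⁅x, ⁅b₁, b₂⁆⁆ = ⁅⁅x, b₁⁆, b₂⁆ - ⁅⁅x, b₂⁆, b₁⁆ := by
      rw [leibniz_lie, ← lie_skew b₁, sub_eq_add_neg]
    have h₁₂ := ih₂ (ih₁ hx hd₁) <| by
      rw [← Finset.insert_union]; exact Finset.disjoint_union_left.2 ⟨hd₂, ht⟩
    have h₂₁ := ih₁ (ih₂ hx hd₂) <| by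
      rw [← Finset.insert_union]; exact Finset.disjoint_union_left.2 ⟨hd₁, ht.symm⟩
    rw [← Ring.lie_def, jacobi]
    rw [Finset.union_assoc] at h₁₂
    rw [Finset.union_right_comm, Finset.union_assoc] at h₂₁
    exact sub_mem h₁₂ h₂₁

lemma lie_mem_leftNormedSpan_erase {s t : Finset (Fin m)} {a b : FreeAlgebra ℤ (Fin m)}
    {i : Fin m} (hi : i ∈ s) (ha : a ∈ leftNormedSpan i (s.erase i)) (hb : LieMono m t b)
    (hd : Disjoint s t) : ⁅a, b⁆ ∈ leftNormedSpan i ((s ∪ t).erase i) := by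
  rw [Finset.erase_union_distrib, Finset.erase_eq_of_notMem (Finset.disjoint_left.1 hd hi)]
  exact lie_mem_leftNormedSpan hb ha (by rwa [Finset.insert_erase hi])

lemma LieMono.mem_leftNormedSpan {s : Finset (Fin m)} {x : FreeAlgebra ℤ (Fin m)}
    (h : LieMono m s x) {i : Fin m} (hi : i ∈ s) : x ∈ leftNormedSpan i (s.erase i) := by
  induction h with
  | gen j =>
    obtain rfl := Finset.mem_singleton.1 hi
    exact Submodule.subset_span ⟨[], ⟨List.nodup_nil, by simp⟩, rfl⟩
  | @bracket s t a b ha hb hd iha ihb =>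
    rw [← Ring.lie_def]
    rcases Finset.mem_union.1 hi with his | hit
    · exact lie_mem_leftNormedSpan_erase his (iha his) hb hd
    · rw [← lie_skew, Finset.union_comm]
      exact neg_mem (lie_mem_leftNormedSpan_erase hit (ihb hit) ha hd.symm)

lemma lieN_eq_leftNormedSpan (i : Fin m) : LieN m = leftNormedSpan i (Finset.univ.erase i) := by
  apply le_antisymm
  · exact Submodule.span_le.2 fun x hx => hx.mem_leftNormedSpan (Finset.mem_univ i)
  · refine Submodule.span_le.2 ?_
    rintro _ ⟨w, hw, rfl⟩
    have h := lieMono_leftNormedBracket hw.1 (notMem_of_mem_orderings_erase hw)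
    rw [hw.2, Finset.insert_erase (Finset.mem_univ i)] at h
    exact Submodule.subset_span h

end Spanning

/-- The multilinear part of the free Lie algebra over `ℤ` on `n + 1`
generators is a free abelian group of rank `n!` (i.e. `(n+1-1)!`). -/
theorem statement1 (n : ℕ) :
    Module.Free ℤ ↥(LieN (n + 1)) ∧
      Module.rank ℤ ↥(LieN (n + 1)) = Nat.factorial n := by
  have hli : LinearIndependent ℤ fun w : orderings (Finset.univ.erase (0 : Fin (n + 1))) =>
      leftNormedBracket ℤ 0 w.1 :=
    linearIndependent_leftNormedBracket fun _ => notMem_of_mem_orderings_erase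
  let b := Module.Basis.span hli
  rw [lieN_eq_leftNormedSpan 0, leftNormedSpan, Set.image_eq_range]
  refine ⟨.of_basis b, ?_⟩
  rw [← b.mk_eq_rank'', mk_orderings, Finset.card_erase_of_mem (Finset.mem_univ 0),
    Finset.card_univ, Fintype.card_fin, Nat.add_sub_cancel]
end
end

section
/- For every h ≥ 1 and n ≥ 1, there is a natural bijection between labeled pruned h-trees with n tips and flags of pre-orders (π_1 ≺ π_2 ≺ ... ≺ π_h) on {1,...,n} with π_h a total order; under this bijection a tree T of dimension i corresponds to a flag with Σ_{s=1}^h |π_s| - h - 1 = i, where |π| is the number of equivalence classes of the pre-order π. -/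
noncomputable section

/-- A labeled pruned `h`-tree with `n` tips: a chain of order-preserving surjections
`[k_h] → [k_{h-1}] → ⋯ → [k_0] = [1]` (surjectivity of each level map is exactly the
condition that every leaf is a tip, i.e. the tree is pruned), together with a labeling
of the tips by `{1,…,n}`. -/
structure LabeledPrunedTree (h n : ℕ) where
  /-- the number of vertices at each level -/
  k : Fin (h + 1) → ℕ
  k_zero : k 0 = 1
  k_pos : ∀ m, 1 ≤ k m
  /-- the level maps (sending a vertex to the vertex below it) -/
  ρ : ∀ m : Fin h, Fin (k m.succ) → Fin (k m.castSucc)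
  mono : ∀ m, Monotone (ρ m)
  pruned : ∀ m, Function.Surjective (ρ m)
  /-- labeling of the tips -/
  label : Fin (k (Fin.last h)) ≃ Fin n

/-- The number of edges of a pruned `h`-tree, `e(T) = Σ_{m=1}^{h} k_m`. -/
def LabeledPrunedTree.edges {h n : ℕ} (T : LabeledPrunedTree h n) : ℕ :=
  ∑ m : Fin h, T.k m.succ

/-- A flag of pre-orders `(π_1 ≺ π_2 ≺ ⋯ ≺ π_h)` on `{1,…,n}`: each `π_s` is a reflexive
transitive total relation, later ones refine earlier ones (`π_s ≺ π_t` for `s ≤ t` means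
`π_t` refines `π_s`), and the last one `π_h` is a total order. -/
structure FlagOfPreorders (h n : ℕ) where
  /-- the pre-orders; index `s : Fin h` corresponds to `π_{s+1}` -/
  le : Fin h → Fin n → Fin n → Prop
  refl : ∀ s i, le s i i
  trans : ∀ s i j l, le s i j → le s j l → le s i l
  total : ∀ s i j, le s i j ∨ le s j i
  refines : ∀ s t : Fin h, s ≤ t → ∀ i j, le t i j → le s i j
  /-- the top pre-order `π_h` is a total order (antisymmetric) -/
  top_antisymm : ∀ s : Fin h, (∀ t, t ≤ s) → ∀ i j, le s i j → le s j i → i = j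

/-- The number `|π_s|` of equivalence classes of the `s`-th pre-order of a flag. -/
def FlagOfPreorders.numClasses {h n : ℕ} (F : FlagOfPreorders h n) (s : Fin h) : ℕ :=
  Nat.card (Quot fun i j : Fin n => F.le s i j ∧ F.le s j i)

/-!
The tip labelled `i` lies above exactly one vertex `ancestor m i` at each level `m` of the tree,
and comparing these vertices defines the pre-order `π_m`. Because the tree is pruned, every
vertex of level `m` has a tip above it, so the classes of `π_m` are the vertices of level `m`
and `|π_m| = k_m`. Conversely, the ordered classes of `π_m` are the vertices of level `m` of a
tree whose level maps are induced by the coarsenings `π_m ≺ π_{m+1}`. A tree is recovered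
from its ancestor maps, and a surjection onto `[k]` is determined by the pre-order it induces,
because the only order isomorphism `[k] ≃o [l]` is the identity; so the two constructions are
mutually inverse.
-/

theorem exists_orderIso_apply_eq_of_le_iff {α β γ : Type*} [PartialOrder β] [PartialOrder γ]
    {f : α → β} {g : α → γ} (hf : Function.Surjective f) (hg : Function.Surjective g)
    (hfg : ∀ i j, f i ≤ f j ↔ g i ≤ g j) : ∃ e : β ≃o γ, ∀ i, e (f i) = g i := by
  have hgf : ∀ i, g (Function.surjInv hf (f i)) = g i := fun i => by
    have hi := Function.surjInv_eq hf (f i)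
    exact le_antisymm ((hfg _ _).1 hi.le) ((hfg _ _).1 hi.ge)
  let φ : β ↪o γ := OrderEmbedding.ofMapLEIff (g ∘ Function.surjInv hf) fun x y => by
    obtain ⟨i, rfl⟩ := hf x
    obtain ⟨j, rfl⟩ := hf y
    simp only [Function.comp_apply, hgf, hfg]
  refine ⟨OrderIso.ofSurjective φ fun y => ?_, hgf⟩
  obtain ⟨i, rfl⟩ := hg y
  exact ⟨f i, hgf i⟩

theorem Fin.eq_and_val_eq_of_le_iff {α : Type*} {k l : ℕ} {f : α → Fin k} {g : α → Fin l}
    (hf : Function.Surjective f) (hg : Function.Surjective g)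
    (hfg : ∀ i j, f i ≤ f j ↔ g i ≤ g j) : k = l ∧ ∀ i, (f i : ℕ) = g i := by
  obtain ⟨e, he⟩ := exists_orderIso_apply_eq_of_le_iff hf hg hfg
  exact ⟨Fin.equiv_iff_eq.1 ⟨e.toEquiv⟩, fun i => by rw [← he, Fin.coe_orderIso_apply]⟩

theorem Nat.card_quot_le_antisymm_of_surjective {α β : Type*} [PartialOrder β] {f : α → β}
    (hf : Function.Surjective f) :
    Nat.card (Quot fun i j => f i ≤ f j ∧ f j ≤ f i) = Nat.card β := by
  have hker : (fun i j => f i ≤ f j ∧ f j ≤ f i) = (Setoid.ker f).r := by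
    funext i j
    exact propext le_antisymm_iff.symm
  rw [hker]
  exact Nat.card_congr (Setoid.quotientKerEquivOfSurjective f hf)

namespace LabeledPrunedTree

variable {h n : ℕ} (T : LabeledPrunedTree h n)

def ancestor : ∀ m : Fin (h + 1), Fin n → Fin (T.k m) :=
  Fin.reverseInduction (motive := fun m => Fin n → Fin (T.k m)) T.label.symm
    fun m a => T.ρ m ∘ a

@[simp]
theorem ancestor_last : T.ancestor (Fin.last h) = T.label.symm :=
  Fin.reverseInduction_last

@[simp]
theorem ancestor_castSucc (m : Fin h) (i : Fin n) :
    T.ancestor m.castSucc i = T.ρ m (T.ancestor m.succ i) := by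
  rw [ancestor, Fin.reverseInduction_castSucc]
  rfl

theorem ancestor_surjective (m : Fin (h + 1)) : Function.Surjective (T.ancestor m) := by
  induction m using Fin.reverseInduction with
  | last => simpa using T.label.symm.surjective
  | cast m ih =>
    rw [show T.ancestor m.castSucc = T.ρ m ∘ T.ancestor m.succ from funext (T.ancestor_castSucc m)]
    exact (T.pruned m).comp ih

theorem ancestor_le_ancestor_of_le {m m' : Fin (h + 1)} (hm : m ≤ m') {i j : Fin n}
    (hij : T.ancestor m' i ≤ T.ancestor m' j) : T.ancestor m i ≤ T.ancestor m j := by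
  have : Antitone fun m => T.ancestor m i ≤ T.ancestor m j :=
    Fin.antitone_iff_succ_le.2 fun m hm => by simpa using T.mono m hm
  exact this hm hij

theorem subsingleton_root : Subsingleton (Fin (T.k 0)) :=
  Fin.subsingleton_iff_le_one.2 T.k_zero.le

theorem ext_of_ancestor {T T' : LabeledPrunedTree h n} (hk : T.k = T'.k)
    (hanc : ∀ m i, (T.ancestor m i : ℕ) = T'.ancestor m i) : T = T' := by
  obtain ⟨k, k_zero, k_pos, ρ, mono, pruned, label⟩ := T
  obtain ⟨k', _, _, ρ', _, _, label'⟩ := T'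
  subst hk
  have hρ : ρ = ρ' := by
    funext m x
    obtain ⟨i, rfl⟩ := ancestor_surjective ⟨k, k_zero, k_pos, ρ, mono, pruned, label⟩ m.succ x
    ext
    have := hanc m.castSucc i
    simp only [ancestor_castSucc] at this
    rw [this]
    exact congrArg (fun x => (ρ' m x : ℕ)) (Fin.ext (hanc m.succ i).symm)
  have hlabel : label.symm = label'.symm := by
    ext i
    simpa using hanc (Fin.last h) i
  cases hρ
  cases Equiv.symm_bijective.injective hlabel
  rfl

def toFlag : FlagOfPreorders h n where
  le s i j := T.ancestor s.succ i ≤ T.ancestor s.succ j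
  refl _ _ := le_rfl
  trans _ _ _ _ := le_trans
  total _ _ _ := le_total _ _
  refines _ _ hst _ _ := T.ancestor_le_ancestor_of_le (Fin.succ_le_succ_iff.2 hst)
  top_antisymm s hs i j hij hji := by
    have hlast : s.succ = Fin.last h := by
      have := hs ⟨h - 1, by have := s.isLt; omega⟩
      ext
      simp only [Fin.le_def, Fin.val_succ, Fin.val_last] at this ⊢
      omega
    have := le_antisymm hij hji
    rw [hlast, ancestor_last] at this
    exact T.label.symm.injective this

theorem numClasses_toFlag (s : Fin h) : T.toFlag.numClasses s = T.k s.succ :=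
  (Nat.card_quot_le_antisymm_of_surjective (T.ancestor_surjective s.succ)).trans (Nat.card_fin _)

theorem edges_eq_sum_numClasses_toFlag : T.edges = ∑ s, T.toFlag.numClasses s :=
  Finset.sum_congr rfl fun s _ => (T.numClasses_toFlag s).symm

theorem toFlag_injective : Function.Injective (toFlag : LabeledPrunedTree h n → _) := by
  intro T T' hTT'
  have hle m i j : T.ancestor m i ≤ T.ancestor m j ↔ T'.ancestor m i ≤ T'.ancestor m j := by
    cases m using Fin.cases with
    | zero =>
      have := T.subsingleton_root
      have := T'.subsingleton_root
      exact iff_of_true (Subsingleton.le _ _) (Subsingleton.le _ _)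
    | succ s => exact iff_of_eq congr(FlagOfPreorders.le $hTT' s i j)
  have hrank m := Fin.eq_and_val_eq_of_le_iff (T.ancestor_surjective m) (T'.ancestor_surjective m)
    (hle m)
  exact ext_of_ancestor (funext fun m => (hrank m).1) fun m => (hrank m).2

end LabeledPrunedTree

namespace FlagOfPreorders

variable {h n : ℕ}

@[ext]
theorem ext {F G : FlagOfPreorders h n} (hle : F.le = G.le) : F = G := by
  cases F
  cases G
  cases hle
  rfl

section Levels

variable (F : FlagOfPreorders h n)

/-- The pre-order of the tips at level `m` of the tree to be built: `π_m` for `m ≥ 1`, and the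
trivial pre-order at the root. -/
def levelLE (m : Fin (h + 1)) : Fin n → Fin n → Prop :=
  Fin.cases (fun _ _ => True) F.le m

theorem levelLE_of_le {m m' : Fin (h + 1)} (hm : m ≤ m') {i j : Fin n}
    (hij : F.levelLE m' i j) : F.levelLE m i j := by
  cases m using Fin.cases with
  | zero => trivial
  | succ s =>
    cases m' using Fin.cases with
    | zero => exact absurd hm (Fin.succ_pos s).not_ge
    | succ t => exact F.refines s t (Fin.succ_le_succ_iff.1 hm) i j hij

def Level (_ : FlagOfPreorders h n) (_ : Fin (h + 1)) : Type := Fin n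

instance (m : Fin (h + 1)) : Preorder (F.Level m) where
  le := F.levelLE m
  le_refl i := by
    cases m using Fin.cases with
    | zero => trivial
    | succ s => exact F.refl s i
  le_trans i j l := by
    cases m using Fin.cases with
    | zero => exact fun _ _ => trivial
    | succ s => exact F.trans s i j l

instance (m : Fin (h + 1)) : Std.Total (α := F.Level m) (· ≤ ·) where
  total i j := by
    cases m using Fin.cases with
    | zero => exact Or.inl trivial
    | succ s => exact F.total s i j

instance (m : Fin (h + 1)) : DecidableLE (F.Level m) := Classical.decRel _

instance (m : Fin (h + 1)) : DecidableLT (F.Level m) := Classical.decRel _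

instance (m : Fin (h + 1)) : Finite (F.Level m) := inferInstanceAs (Finite (Fin n))

abbrev Classes (m : Fin (h + 1)) : Type := Antisymmetrization (F.Level m) (· ≤ ·)

instance (m : Fin (h + 1)) : Fintype (F.Classes m) :=
  have : Finite (F.Classes m) := Quotient.finite _
  Fintype.ofFinite _

def rank (m : Fin (h + 1)) (i : Fin n) : Fin (Fintype.card (F.Classes m)) :=
  (Fintype.orderIsoFinOfCardEq (F.Classes m) rfl).symm
    (toAntisymmetrization (· ≤ ·) (show F.Level m from i))

theorem rank_le_rank_iff {m : Fin (h + 1)} {i j : Fin n} :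
    F.rank m i ≤ F.rank m j ↔ F.levelLE m i j :=
  (OrderIso.le_iff_le _).trans toAntisymmetrization_le_toAntisymmetrization_iff

theorem rank_surjective (m : Fin (h + 1)) : Function.Surjective (F.rank m) :=
  (OrderIso.surjective _).comp Quotient.mk_surjective

theorem card_classes_zero [NeZero n] : Fintype.card (F.Classes 0) = 1 := by
  have : Subsingleton (F.Classes 0) :=
    ⟨Quotient.ind₂ fun _ _ => Quotient.sound ⟨trivial, trivial⟩⟩
  exact Fintype.card_eq_one_iff_nonempty_unique.2
    ⟨uniqueOfSubsingleton (toAntisymmetrization _ (show F.Level 0 from (0 : Fin n)))⟩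

def project (m : Fin h) :
    Fin (Fintype.card (F.Classes m.succ)) → Fin (Fintype.card (F.Classes m.castSucc)) :=
  let forget : F.Level m.succ →o F.Level m.castSucc :=
    ⟨fun i => show Fin n from i, fun _ _ => F.levelLE_of_le Fin.castSucc_lt_succ.le⟩
  fun x => (Fintype.orderIsoFinOfCardEq _ rfl).symm
    (forget.antisymmetrization (Fintype.orderIsoFinOfCardEq _ rfl x))

theorem project_rank (m : Fin h) (i : Fin n) :
    F.project m (F.rank m.succ i) = F.rank m.castSucc i := by
  simp only [project, rank, OrderIso.apply_symm_apply]
  rfl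

theorem project_monotone (m : Fin h) : Monotone (F.project m) := by
  intro x y hxy
  obtain ⟨i, rfl⟩ := F.rank_surjective _ x
  obtain ⟨j, rfl⟩ := F.rank_surjective _ y
  rw [F.project_rank, F.project_rank, F.rank_le_rank_iff]
  exact F.levelLE_of_le Fin.castSucc_lt_succ.le (F.rank_le_rank_iff.1 hxy)

theorem project_surjective (m : Fin h) : Function.Surjective (F.project m) := by
  intro x
  obtain ⟨i, rfl⟩ := F.rank_surjective _ x
  exact ⟨_, F.project_rank m i⟩

end Levels

variable (F : FlagOfPreorders (h + 1) n)

theorem rank_last_injective : Function.Injective (F.rank (Fin.last (h + 1))) := fun i j hij =>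
  F.top_antisymm (Fin.last h) Fin.le_last i j (F.rank_le_rank_iff.1 hij.le)
    (F.rank_le_rank_iff.1 hij.ge)

variable [NeZero n]

def toTree : LabeledPrunedTree (h + 1) n where
  k m := Fintype.card (F.Classes m)
  k_zero := F.card_classes_zero
  k_pos m := Fin.pos_iff_nonempty.2 ⟨F.rank m 0⟩
  ρ := F.project
  mono := F.project_monotone
  pruned := F.project_surjective
  label := (Equiv.ofBijective _ ⟨F.rank_last_injective, F.rank_surjective _⟩).symm

theorem ancestor_toTree (m : Fin (h + 2)) : F.toTree.ancestor m = F.rank m := by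
  induction m using Fin.reverseInduction with
  | last => simp only [toTree, LabeledPrunedTree.ancestor_last, Equiv.symm_symm]; rfl
  | cast m ih =>
    funext i
    rw [LabeledPrunedTree.ancestor_castSucc, ih]
    exact F.project_rank m i

theorem toFlag_toTree : F.toTree.toFlag = F := by
  ext s i j
  show F.toTree.ancestor s.succ i ≤ F.toTree.ancestor s.succ j ↔ F.le s i j
  rw [ancestor_toTree]
  exact F.rank_le_rank_iff

end FlagOfPreorders

def LabeledPrunedTree.equivFlag (h n : ℕ) [NeZero n] :
    LabeledPrunedTree (h + 1) n ≃ FlagOfPreorders (h + 1) n :=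
  Equiv.ofBijective toFlag ⟨toFlag_injective, fun F => ⟨F.toTree, F.toFlag_toTree⟩⟩

/-- For every `h ≥ 1` and `n ≥ 1` there is a natural bijection between
labeled pruned `h`-trees with `n` tips and flags of pre-orders `(π_1 ≺ ⋯ ≺ π_h)` on
`{1,…,n}` with `π_h` a total order; under this bijection a tree `T` of dimension `i`
corresponds to a flag with `Σ_{s=1}^h |π_s| − h − 1 = i`, i.e. the number of edges of `T`
equals `Σ_{s=1}^h |π_s|`. -/
theorem statement10 (h n : ℕ) (hh : 1 ≤ h) (hn : 1 ≤ n) :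
    ∃ e : LabeledPrunedTree h n ≃ FlagOfPreorders h n,
      ∀ T : LabeledPrunedTree h n, T.edges = ∑ s : Fin h, (e T).numClasses s := by
  obtain ⟨h, rfl⟩ : ∃ h', h = h' + 1 := ⟨h - 1, by omega⟩
  have : NeZero n := ⟨by omega⟩
  exact ⟨LabeledPrunedTree.equivFlag h n, LabeledPrunedTree.edges_eq_sum_numClasses_toFlag⟩
end
end

section
/- Each Fox–Neuwirth stratum [T] ⊂ Conf(ℝ^h,n), for T a labeled pruned h-tree with n tips, is homeomorphic to an open ball of dimension e(T) = Σ_{s=1}^h |π_s|, where (π_1 ≺ ... ≺ π_h) is the flag of pre-orders corresponding to T and |π| is its number of equivalence classes. -/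
noncomputable section

/-- The lexicographic comparison of the first `s` coordinates. -/
def lexLe (h : ℕ) (s : ℕ) (x y : Fin h → ℝ) : Prop :=
  (∀ t : Fin h, (t : ℕ) < s → x t = y t) ∨
  ∃ t : Fin h, (t : ℕ) < s ∧ (∀ u : Fin h, u < t → x u = y u) ∧ x t < y t

/-- The Fox–Neuwirth stratum `[T] ⊆ Conf(ℝ^h, n)` of the flag (= labeled pruned `h`-tree)
`F`: the injections whose flag of lexicographic pre-orders is that of `F`. -/
def FNCell (h n : ℕ) (F : FlagOfPreorders h n) : Set (Fin n → Fin h → ℝ) :=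
  {f | Function.Injective f ∧
    ∀ (s : Fin h) (i j : Fin n), F.le s i j ↔ lexLe h ((s : ℕ) + 1) (f i) (f j)}

open Set Metric

namespace FNProof

/-! ### Lexicographic order lemmas -/

theorem lexLe_antisymm {h : ℕ} {s : ℕ} {x y : Fin h → ℝ}
    (h1 : lexLe h s x y) (h2 : lexLe h s y x) :
    ∀ t : Fin h, (t : ℕ) < s → x t = y t := by
  rcases h1 with h1 | ⟨t, ht, hpre, hlt⟩
  · exact h1
  rcases h2 with h2 | ⟨t', ht', hpre', hlt'⟩
  · exact fun u hu => (h2 u hu).symm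
  exfalso
  rcases lt_trichotomy t t' with hc | hc | hc
  · exact absurd (hpre' t hc).symm (ne_of_lt hlt)
  · subst hc; exact lt_asymm hlt hlt'
  · exact absurd (hpre t' hc) (ne_of_gt hlt')

theorem not_lexLe_of_strict {h : ℕ} {s : ℕ} {x y : Fin h → ℝ} (t0 : Fin h) (h1 : (t0 : ℕ) < s)
    (hpre : ∀ u, u < t0 → x u = y u) (hlt : y t0 < x t0) : ¬ lexLe h s x y := by
  rintro (hall | ⟨t', ht', hpre', hlt'⟩)
  · exact absurd (hall t0 h1) (ne_of_gt hlt)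
  · rcases lt_trichotomy t' t0 with hc | hc | hc
    · exact absurd (hpre t' hc) (ne_of_lt hlt')
    · subst hc; exact lt_asymm hlt hlt'
    · exact absurd (hpre' t0 hc) (ne_of_gt hlt)

/-! ### The model space -/

variable {h n : ℕ} (F : FlagOfPreorders h n)

/-- The set of equivalence classes of the `t`-th preorder. -/
abbrev FNQ (t : Fin h) := Quot (fun i j : Fin n => F.le t i j ∧ F.le t j i)

noncomputable instance (t : Fin h) : Fintype (FNQ F t) := Fintype.ofFinite _

/-- The model vector space for the stratum. -/
abbrev Wsp := ∀ t : Fin h, FNQ F t → ℝ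

theorem continuous_eval (t : Fin h) (c : FNQ F t) : Continuous fun g : Wsp F => g t c := by
  have h1 : Continuous fun g : Wsp F => g t := continuous_apply t
  exact (continuous_apply c).comp h1

/-- The linear parametrization of the stratum. -/
def Ψmap (g : Wsp F) : Fin n → Fin h → ℝ := fun i t => g t (Quot.mk _ i)

/-- The model open convex set. -/
def Cset : Set (Wsp F) :=
  {g | ∀ (t : Fin h) (i j : Fin n), (∀ u : Fin h, u < t → F.le u i j ∧ F.le u j i) →
    F.le t i j → ¬ F.le t j i → g t (Quot.mk _ i) < g t (Quot.mk _ j)}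

theorem FNCell_eq (hh : 1 ≤ h) : FNCell h n F = Ψmap F '' Cset F := by
  classical
  ext f
  constructor
  · rintro ⟨hinj, hiff⟩
    have wd : ∀ (t : Fin h) (i j : Fin n), F.le t i j → F.le t j i → f i t = f j t := by
      intro t i j h1 h2
      exact lexLe_antisymm ((hiff t i j).mp h1) ((hiff t j i).mp h2) t (Nat.lt_succ_self _)
    refine ⟨fun t => Quot.lift (fun i => f i t) (fun i j hij => wd t i j hij.1 hij.2), ?_, ?_⟩
    · intro t i j hpre h1 h2
      show f i t < f j t
      have hx : lexLe h ((t : ℕ) + 1) (f i) (f j) := (hiff t i j).mp h1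
      have hy : ¬ lexLe h ((t : ℕ) + 1) (f j) (f i) := fun hc => h2 ((hiff t j i).mpr hc)
      have hprefix : ∀ u : Fin h, u < t → f i u = f j u :=
        fun u hu => wd u i j (hpre u hu).1 (hpre u hu).2
      rcases hx with hall | ⟨t', ht', hpre', hlt'⟩
      · exact absurd (Or.inl fun u hu => (hall u hu).symm) hy
      · have ht'eq : t' = t := by
          rcases lt_trichotomy t' t with hc | hc | hc
          · exact absurd (hprefix t' hc) (ne_of_lt hlt')
          · exact hc
          · exact absurd ht' (by have := Fin.lt_def.mp hc; omega)
        rw [ht'eq] at hlt'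
        exact hlt'
    · funext i t; rfl
  · rintro ⟨g, hg, rfl⟩
    have key : ∀ (s : Fin h) (i j : Fin n),
        F.le s i j ↔ lexLe h ((s : ℕ) + 1) (Ψmap F g i) (Ψmap F g j) := by
      intro s i j
      by_cases h1 : F.le s i j
      · by_cases h2 : F.le s j i
        · refine iff_of_true h1 (Or.inl fun u hu => ?_)
          have hus : u ≤ s := Fin.le_def.mpr (by omega)
          exact congrArg (g u) (Quot.sound ⟨F.refines u s hus i j h1, F.refines u s hus j i h2⟩)
        · refine iff_of_true h1 ?_
          obtain ⟨t0, ht0mem, ht0min⟩ := Finset.exists_min_image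
            (Finset.univ.filter fun t : Fin h => ¬ (F.le t i j ∧ F.le t j i)) id
            ⟨s, by simp only [Finset.mem_filter, Finset.mem_univ, true_and]; tauto⟩
          simp only [Finset.mem_filter, Finset.mem_univ, true_and, id_eq] at ht0mem ht0min
          have ht0s : t0 ≤ s := ht0min s (fun hc => h2 hc.2)
          have hpre : ∀ u : Fin h, u < t0 → F.le u i j ∧ F.le u j i := by
            intro u hu
            by_contra hx
            exact absurd (ht0min u hx) (not_le.mpr hu)
          have hlet0 : F.le t0 i j := F.refines t0 s ht0s i j h1
          have hnle : ¬ F.le t0 j i := fun hc => ht0mem ⟨hlet0, hc⟩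
          refine Or.inr ⟨t0, by have := Fin.le_def.mp ht0s; omega, ?_,
            hg t0 i j hpre hlet0 hnle⟩
          intro u hu
          exact congrArg (g u) (Quot.sound (hpre u hu))
      · have h2 : F.le s j i := (F.total s i j).resolve_left h1
        refine iff_of_false h1 ?_
        obtain ⟨t0, ht0mem, ht0min⟩ := Finset.exists_min_image
          (Finset.univ.filter fun t : Fin h => ¬ (F.le t i j ∧ F.le t j i)) id
          ⟨s, by simp only [Finset.mem_filter, Finset.mem_univ, true_and]; tauto⟩
        simp only [Finset.mem_filter, Finset.mem_univ, true_and, id_eq] at ht0mem ht0min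
        have ht0s : t0 ≤ s := ht0min s (fun hc => h1 hc.1)
        have hpre : ∀ u : Fin h, u < t0 → F.le u i j ∧ F.le u j i := by
          intro u hu
          by_contra hx
          exact absurd (ht0min u hx) (not_le.mpr hu)
        have hlet0 : F.le t0 j i := F.refines t0 s ht0s j i h2
        have hnle : ¬ F.le t0 i j := fun hc => ht0mem ⟨hc, hlet0⟩
        refine not_lexLe_of_strict t0 (by have := Fin.le_def.mp ht0s; omega) ?_
          (hg t0 j i (fun u hu => ⟨(hpre u hu).2, (hpre u hu).1⟩) hlet0 hnle)
        intro u hu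
        exact congrArg (g u) (Quot.sound (hpre u hu))
    have hinj : Function.Injective (Ψmap F g) := by
      intro i j hf
      have hsl : h - 1 < h := by omega
      set sl : Fin h := ⟨h - 1, hsl⟩ with hsldef
      have htop : ∀ t : Fin h, t ≤ sl := fun t => Fin.le_def.mpr (by have := t.2; simp [hsldef]; omega)
      have e1 : F.le sl i j := (key sl i j).mpr (Or.inl fun u _ => by rw [hf])
      have e2 : F.le sl j i := (key sl j i).mpr (Or.inl fun u _ => by rw [hf])
      exact F.top_antisymm sl htop i j e1 e2
    exact ⟨hinj, key⟩

/-! ### Properties of the model set -/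

theorem combo_lt {x1 y1 x2 y2 a b : ℝ} (ha : 0 ≤ a) (hb : 0 ≤ b) (hab : a + b = 1)
    (h1 : x1 < y1) (h2 : x2 < y2) : a * x1 + b * x2 < a * y1 + b * y2 := by
  rcases ha.lt_or_eq with ha' | ha'
  · have H1 := mul_lt_mul_of_pos_left h1 ha'
    have H2 := mul_le_mul_of_nonneg_left h2.le hb
    linarith
  · have hb1 : b = 1 := by linarith
    rw [← ha', hb1]
    simpa using h2

theorem Cset_convex : Convex ℝ (Cset F) := by
  intro g1 hg1 g2 hg2 a b ha hb hab
  intro t i j hpre hle hnle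
  have H1 := hg1 t i j hpre hle hnle
  have H2 := hg2 t i j hpre hle hnle
  simp only [Pi.add_apply, Pi.smul_apply, smul_eq_mul]
  exact combo_lt ha hb hab H1 H2

theorem Cset_open : IsOpen (Cset F) := by
  classical
  have : Cset F = ⋂ (t : Fin h), ⋂ (i : Fin n), ⋂ (j : Fin n),
      {g : Wsp F | (∀ u : Fin h, u < t → F.le u i j ∧ F.le u j i) →
        F.le t i j → ¬ F.le t j i → g t (Quot.mk _ i) < g t (Quot.mk _ j)} := by
    ext g
    simp only [Cset, Set.mem_iInter, Set.mem_setOf_eq]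
  rw [this]
  refine isOpen_iInter_of_finite fun t => isOpen_iInter_of_finite fun i =>
    isOpen_iInter_of_finite fun j => ?_
  by_cases hc : (∀ u : Fin h, u < t → F.le u i j ∧ F.le u j i) ∧ F.le t i j ∧ ¬ F.le t j i
  · have heq : {g : Wsp F | (∀ u : Fin h, u < t → F.le u i j ∧ F.le u j i) →
        F.le t i j → ¬ F.le t j i → g t (Quot.mk _ i) < g t (Quot.mk _ j)} =
        {g : Wsp F | g t (Quot.mk _ i) < g t (Quot.mk _ j)} := by
      ext g
      simp only [Set.mem_setOf_eq]
      exact ⟨fun H => H hc.1 hc.2.1 hc.2.2, fun H _ _ _ => H⟩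
    rw [heq]
    exact isOpen_lt (continuous_eval F t _) (continuous_eval F t _)
  · have heq : {g : Wsp F | (∀ u : Fin h, u < t → F.le u i j ∧ F.le u j i) →
        F.le t i j → ¬ F.le t j i → g t (Quot.mk _ i) < g t (Quot.mk _ j)} = Set.univ := by
      ext g
      simp only [Set.mem_setOf_eq, Set.mem_univ, iff_true]
      intro H1 H2 H3
      exact absurd ⟨H1, H2, H3⟩ hc
    rw [heq]
    exact isOpen_univ

theorem Cset_nonempty : (Cset F).Nonempty := by
  refine ⟨fun t => Quot.lift (fun i => (({j | F.le t j i} : Set (Fin n)).ncard : ℝ)) ?_, ?_⟩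
  · intro i j hij
    have hs : {j' | F.le t j' i} = {j' | F.le t j' j} := by
      ext j'
      exact ⟨fun hx => F.trans t j' i j hx hij.1, fun hx => F.trans t j' j i hx hij.2⟩
    simp only [hs]
  · intro t i j hpre h1 h2
    show (({j' | F.le t j' i} : Set (Fin n)).ncard : ℝ) < ({j' | F.le t j' j} : Set (Fin n)).ncard
    rw [Nat.cast_lt]
    apply Set.ncard_lt_ncard
    · constructor
      · intro j' hj'
        exact F.trans t j' i j hj' h1
      · intro hsub
        exact h2 (hsub (F.refl t j))
    · exact Set.toFinite _

/-! ### The bounded model set -/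

/-- The bounded model open convex set. -/
def Dset : Set (Wsp F) :=
  {g | (∀ (t : Fin h) (c : FNQ F t), g t c ∈ Ioo (-1 : ℝ) 1) ∧
    ∀ (t : Fin h) (i j : Fin n), (∀ u : Fin h, u < t → F.le u i j ∧ F.le u j i) →
      F.le t i j → ¬ F.le t j i → g t (Quot.mk _ i) < g t (Quot.mk _ j)}

/-- The squashing homeomorphism. -/
noncomputable def homeoCD : (Cset F) ≃ₜ (Dset F) where
  toFun g := ⟨fun t c => (orderIsoIooNegOneOne ℝ (g.1 t c) : ℝ),
    ⟨fun t c => (orderIsoIooNegOneOne ℝ (g.1 t c)).2,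
     fun t i j hpre hle hnle =>
       Subtype.coe_lt_coe.mpr
         ((orderIsoIooNegOneOne ℝ).strictMono (g.2 t i j hpre hle hnle))⟩⟩
  invFun g := ⟨fun t c => (orderIsoIooNegOneOne ℝ).symm ⟨g.1 t c, g.2.1 t c⟩,
    fun t i j hpre hle hnle =>
      (orderIsoIooNegOneOne ℝ).symm.strictMono
        (Subtype.mk_lt_mk.mpr (g.2.2 t i j hpre hle hnle))⟩
  left_inv g := by
    apply Subtype.ext
    funext t c
    show (orderIsoIooNegOneOne ℝ).symm ⟨(orderIsoIooNegOneOne ℝ (g.1 t c) : ℝ), _⟩ = g.1 t c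
    rw [Subtype.coe_eta, OrderIso.symm_apply_apply]
  right_inv g := by
    apply Subtype.ext
    funext t c
    show ((orderIsoIooNegOneOne ℝ) ((orderIsoIooNegOneOne ℝ).symm ⟨g.1 t c, _⟩) : ℝ) = g.1 t c
    rw [OrderIso.apply_symm_apply]
  continuous_toFun := by
    refine Continuous.subtype_mk ?_ _
    refine continuous_pi fun t => continuous_pi fun c => ?_
    have hb : Continuous fun g : (Cset F) => g.1 t c :=
      (continuous_eval F t c).comp continuous_subtype_val
    exact continuous_subtype_val.comp ((orderIsoIooNegOneOne ℝ).continuous.comp hb)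
  continuous_invFun := by
    refine Continuous.subtype_mk ?_ _
    refine continuous_pi fun t => continuous_pi fun c => ?_
    have hb : Continuous fun g : (Dset F) => g.1 t c :=
      (continuous_eval F t c).comp continuous_subtype_val
    exact (orderIsoIooNegOneOne ℝ).symm.continuous.comp (Continuous.subtype_mk hb _)

theorem Dset_convex : Convex ℝ (Dset F) := by
  intro g1 hg1 g2 hg2 a b ha hb hab
  constructor
  · intro t c
    have H := convex_Ioo (-1 : ℝ) 1 (hg1.1 t c) (hg2.1 t c) ha hb hab
    simpa using H
  · intro t i j hpre hle hnle
    have H1 := hg1.2 t i j hpre hle hnle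
    have H2 := hg2.2 t i j hpre hle hnle
    simp only [Pi.add_apply, Pi.smul_apply, smul_eq_mul]
    exact combo_lt ha hb hab H1 H2

theorem Dset_open : IsOpen (Dset F) := by
  have : Dset F = {g : Wsp F | ∀ (t : Fin h) (c : FNQ F t), g t c ∈ Ioo (-1 : ℝ) 1} ∩ Cset F := rfl
  rw [this]
  refine IsOpen.inter ?_ (Cset_open F)
  have : {g : Wsp F | ∀ (t : Fin h) (c : FNQ F t), g t c ∈ Ioo (-1 : ℝ) 1} =
      ⋂ (t : Fin h), ⋂ (c : FNQ F t), {g : Wsp F | g t c ∈ Ioo (-1 : ℝ) 1} := by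
    ext g
    simp only [Set.mem_iInter, Set.mem_setOf_eq]
  rw [this]
  refine isOpen_iInter_of_finite fun t => isOpen_iInter_of_finite fun c => ?_
  exact isOpen_Ioo.preimage (continuous_eval F t c)

theorem Dset_bounded : Bornology.IsBounded (Dset F) := by
  refine (Metric.isBounded_closedBall (x := (0 : Wsp F)) (r := 1)).subset ?_
  intro g hg
  rw [Metric.mem_closedBall, dist_zero_right]
  rw [pi_norm_le_iff_of_nonneg (by norm_num : (0:ℝ) ≤ 1)]
  intro t
  rw [pi_norm_le_iff_of_nonneg (by norm_num : (0:ℝ) ≤ 1)]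
  intro c
  have := hg.1 t c
  rw [Real.norm_eq_abs, abs_le]
  exact ⟨(this.1).le, (this.2).le⟩

theorem finrank_Wsp : Module.finrank ℝ (Wsp F) = ∑ s : Fin h, F.numClasses s := by
  rw [Module.finrank_pi_fintype]
  refine Finset.sum_congr rfl fun t _ => ?_
  rw [Module.finrank_fintype_fun_eq_card, FlagOfPreorders.numClasses, Nat.card_eq_fintype_card]

end FNProof


/-- Each Fox–Neuwirth stratum `[T] ⊆ Conf(ℝ^h, n)` is homeomorphic to
an open ball of dimension `e(T) = Σ_{s=1}^h |π_s|`. -/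
theorem statement14 (h n : ℕ) (hh : 1 ≤ h) (hn : 1 ≤ n) (F : FlagOfPreorders h n) :
    Nonempty
      (FNCell h n F ≃ₜ
        (Metric.ball (0 : EuclideanSpace ℝ (Fin (∑ s : Fin h, F.numClasses s))) 1)) := by
  classical
  open FNProof Set Metric in
  have hset : FNCell h n F = Ψmap F '' Cset F := FNCell_eq F hh
  let Rmap : (Fin n → Fin h → ℝ) → Wsp F := fun f t c => f (Quot.out c) t
  have hRΨ : ∀ g : Wsp F, Rmap (Ψmap F g) = g := by
    intro g
    funext t c
    show g t (Quot.mk _ (Quot.out c)) = g t c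
    rw [Quot.out_eq]
  have hmem1 : ∀ f : FNCell h n F, Rmap f.1 ∈ Cset F := by
    intro f
    obtain ⟨g, hg, hfg⟩ : f.1 ∈ Ψmap F '' Cset F := by rw [← hset]; exact f.2
    rw [← hfg, hRΨ]
    exact hg
  have hΨR : ∀ f : FNCell h n F, Ψmap F (Rmap f.1) = f.1 := by
    intro f
    obtain ⟨g, hg, hfg⟩ : f.1 ∈ Ψmap F '' Cset F := by rw [← hset]; exact f.2
    rw [← hfg, hRΨ]
  let e1 : FNCell h n F ≃ₜ Cset F :=
    { toFun := fun f => ⟨Rmap f.1, hmem1 f⟩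
      invFun := fun g => ⟨Ψmap F g.1, by rw [hset]; exact Set.mem_image_of_mem _ g.2⟩
      left_inv := fun f => Subtype.ext (hΨR f)
      right_inv := fun g => Subtype.ext (hRΨ g.1)
      continuous_toFun := by
        refine Continuous.subtype_mk ?_ _
        refine continuous_pi fun t => continuous_pi fun c => ?_
        show Continuous fun a : (FNCell h n F) => (a.1) (Quot.out c) t
        exact (continuous_apply_apply (Quot.out c) t).comp continuous_subtype_val
      continuous_invFun := by
        refine Continuous.subtype_mk ?_ _
        refine continuous_pi fun i => continuous_pi fun t => ?_
        show Continuous fun a : (Cset F) => (a.1) t (Quot.mk _ i)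
        exact (continuous_eval F t (Quot.mk _ i)).comp continuous_subtype_val }
  obtain ⟨g0, hg0⟩ := Cset_nonempty F
  have hDne : (interior (Dset F)).Nonempty := by
    rw [(Dset_open F).interior_eq]
    exact ⟨(homeoCD F ⟨g0, hg0⟩).1, (homeoCD F ⟨g0, hg0⟩).2⟩
  obtain ⟨hom, h1, -, -⟩ := exists_homeomorph_image_interior_closure_frontier_eq_unitBall
    (Dset_convex F) hDne (Dset_bounded F)
  rw [(Dset_open F).interior_eq] at h1
  let e3 : (Dset F) ≃ₜ (Metric.ball (0 : Wsp F) 1) :=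
    (hom.image (Dset F)).trans (Homeomorph.setCongr h1)
  let L : Wsp F ≃L[ℝ] EuclideanSpace ℝ (Fin (∑ s : Fin h, F.numClasses s)) :=
    (LinearEquiv.ofFinrankEq _ _
      (by rw [finrank_Wsp, finrank_euclideanSpace_fin])).toContinuousLinearEquiv
  let e4 : (Metric.ball (0 : Wsp F) 1) ≃ₜ
      (Metric.ball (0 : EuclideanSpace ℝ (Fin (∑ s : Fin h, F.numClasses s))) 1) :=
    (Homeomorph.unitBall.symm.trans L.toHomeomorph).trans Homeomorph.unitBall
  exact ⟨((e1.trans (homeoCD F)).trans e3).trans e4⟩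
end
end
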